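/- The Cayley graph Cay(Z/65, {2^i mod 65 : 0 ≤ i ≤ 11}) is edge-regular with parameters (65, 12, 3), and the cosets of the subgroup {0, 13, 26, 39, 52} of Z/65 form a partition of its vertex set into thirteen perfect 1-codes of size 5. -/
import Mathlib


/-- The Cayley graph on `ℤ/65` with connection set `{2^i mod 65 : 0 ≤ i ≤ 11}`. -/
def cay65 : SimpleGraph (ZMod 65) :=
  SimpleGraph.fromRel (fun x y => ∃ i : Fin 12, x - y = 2 ^ (i : ℕ))

/-- `C` is a perfect 1-code in `G`. -/
def IsPerfectOneCode {V : Type*} (G : SimpleGraph V) (C : Set V) : Prop :=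
  ∀ v, ∃! c, c ∈ C ∧ (c = v ∨ G.Adj c v)

/-- `G` is edge-regular with parameters `(v, k, l)`. -/
def IsEdgeRegular {V : Type*} (G : SimpleGraph V) (v k l : ℕ) : Prop :=
  Nat.card V = v ∧ (∀ x, (G.neighborSet x).ncard = k) ∧ G ≠ ⊥ ∧
    ∀ x y, G.Adj x y → (G.commonNeighbors x y).ncard = l

/-- The subgroup `{0, 13, 26, 39, 52}` of `ℤ/65`. -/
def sub13 : AddSubgroup (ZMod 65) := AddSubgroup.zmultiples (13 : ZMod 65)

instance : DecidableRel cay65.Adj := fun x y =>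
  decidable_of_iff (x ≠ y ∧ ((∃ i : Fin 12, x - y = 2 ^ (i : ℕ)) ∨ ∃ i : Fin 12, y - x = 2 ^ (i : ℕ)))
    (by rw [cay65, SimpleGraph.fromRel_adj])

instance decExistsUnique {α : Type*} [Fintype α] [DecidableEq α] (p : α → Prop) [DecidablePred p] :
    Decidable (∃! x, p x) := by unfold ExistsUnique; infer_instance

lemma adj_shift (a x y : ZMod 65) : cay65.Adj (a + x) (a + y) ↔ cay65.Adj x y := by
  rw [cay65, SimpleGraph.fromRel_adj, SimpleGraph.fromRel_adj]
  simp [add_sub_add_left_eq_sub]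

lemma hsub13 : (sub13 : Set (ZMod 65)) = {0, 13, 26, 39, 52} := by
  apply subset_antisymm
  · intro x hx
    obtain ⟨k, rfl⟩ := AddSubgroup.mem_zmultiples_iff.mp hx
    have hk : k % 5 = 0 ∨ k % 5 = 1 ∨ k % 5 = 2 ∨ k % 5 = 3 ∨ k % 5 = 4 := by omega
    have key : k • (13 : ZMod 65) = (k % 5) • (13 : ZMod 65) := by
      conv_lhs => rw [← Int.emod_add_mul_ediv k 5]
      rw [add_smul, mul_comm, mul_smul]
      have h5 : (5 : ℤ) • (13 : ZMod 65) = 0 := by decide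
      rw [h5, smul_zero, add_zero]
    rw [key]
    rcases hk with h | h | h | h | h <;> rw [h] <;> decide
  · intro x hx
    rcases hx with rfl | rfl | rfl | rfl | rfl
    · exact AddSubgroup.mem_zmultiples_iff.mpr ⟨0, by decide⟩
    · exact AddSubgroup.mem_zmultiples_iff.mpr ⟨1, by decide⟩
    · exact AddSubgroup.mem_zmultiples_iff.mpr ⟨2, by decide⟩
    · exact AddSubgroup.mem_zmultiples_iff.mpr ⟨3, by decide⟩
    · exact AddSubgroup.mem_zmultiples_iff.mpr ⟨4, by decide⟩

lemma S0_ncard : ({0, 13, 26, 39, 52} : Set (ZMod 65)).ncard = 5 := by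
  rw [show ({0, 13, 26, 39, 52} : Set (ZMod 65))
      = (↑({0, 13, 26, 39, 52} : Finset (ZMod 65)) : Set (ZMod 65)) by simp,
    Set.ncard_coe_finset]
  decide

set_option maxRecDepth 8000 in
lemma code0 : ∀ v : ZMod 65,
    ∃! c, c ∈ ({0, 13, 26, 39, 52} : Set (ZMod 65)) ∧ (c = v ∨ cay65.Adj c v) := by
  decide

theorem stmt10 :
    IsEdgeRegular cay65 65 12 3 ∧
    (sub13 : Set (ZMod 65)) = {0, 13, 26, 39, 52} ∧
    -- each of the thirteen cosets of `{0,13,26,39,52}` is a perfect 1-code of size 5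
    (∀ w : ZMod 65,
      IsPerfectOneCode cay65 ((w + ·) '' (sub13 : Set (ZMod 65))) ∧
      ((w + ·) '' (sub13 : Set (ZMod 65))).ncard = 5) ∧
    Nat.card (ZMod 65 ⧸ sub13) = 13 := by
  refine ⟨⟨?_, ?_, ?_, ?_⟩, hsub13, ?_, ?_⟩
  · -- Nat.card = 65
    simp [Nat.card_eq_fintype_card]
  · -- regularity
    have h0 : (cay65.neighborSet 0).ncard = 12 := by
      rw [Set.ncard_eq_toFinset_card']
      decide
    intro x
    have hEq : cay65.neighborSet x = (x + ·) '' cay65.neighborSet 0 := by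
      ext y
      simp only [SimpleGraph.mem_neighborSet, Set.mem_image]
      constructor
      · intro h
        refine ⟨y - x, ?_, by ring⟩
        have := (adj_shift x 0 (y - x)).mp (by simpa using h)
        simpa using this
      · rintro ⟨u, hu, rfl⟩
        have := (adj_shift x 0 u).mpr hu
        simpa using this
    rw [hEq, Set.ncard_image_of_injective _ (add_right_injective x), h0]
  · -- G ≠ ⊥
    intro h
    have hadj : cay65.Adj 1 0 := by decide
    rw [h] at hadj
    exact hadj
  · -- common neighbors
    have key : ∀ s : ZMod 65, cay65.Adj s 0 →
        ((cay65.neighborSet s ∩ cay65.neighborSet 0).toFinset.card = 3) := by decide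
    intro x y hxy
    have htr : cay65.commonNeighbors x y
        = (y + ·) '' (cay65.neighborSet (x - y) ∩ cay65.neighborSet 0) := by
      ext z
      simp only [SimpleGraph.mem_commonNeighbors, Set.mem_image, Set.mem_inter_iff,
        SimpleGraph.mem_neighborSet]
      constructor
      · rintro ⟨h1, h2⟩
        refine ⟨z - y, ⟨?_, ?_⟩, by ring⟩
        · have := (adj_shift y (x - y) (z - y)).mp (by simpa using h1)
          exact this
        · have := (adj_shift y 0 (z - y)).mp (by simpa using h2)
          exact this
      · rintro ⟨u, ⟨h1, h2⟩, rfl⟩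
        constructor
        · have := (adj_shift y (x - y) u).mpr h1
          simpa using this
        · have := (adj_shift y 0 u).mpr h2
          simpa using this
    have hadj0 : cay65.Adj (x - y) 0 := by
      have := (adj_shift y (x - y) 0).mpr
      exact (adj_shift y (x - y) 0).mp (by simpa using hxy)
    rw [htr, Set.ncard_image_of_injective _ (add_right_injective y),
      Set.ncard_eq_toFinset_card', key _ hadj0]
  · -- perfect codes
    intro w
    rw [hsub13]
    constructor
    · intro v
      obtain ⟨c0, ⟨hc0S, hc0⟩, huniq⟩ := code0 (v - w)
      refine ⟨w + c0, ⟨⟨c0, hc0S, rfl⟩, ?_⟩, ?_⟩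
      · rcases hc0 with h | h
        · left; rw [h]; ring
        · right
          have := (adj_shift w c0 (v - w)).mpr h
          simpa using this
      · rintro c' ⟨⟨d, hdS, rfl⟩, hc'⟩
        have hd : d = c0 := by
          apply huniq
          refine ⟨hdS, ?_⟩
          rcases hc' with h | h
          · left
            rw [← h]; ring
          · right
            have : cay65.Adj (w + d) (w + (v - w)) := by simpa using h
            exact (adj_shift w d (v - w)).mp this
        rw [hd]
    · rw [Set.ncard_image_of_injective _ (add_right_injective w), S0_ncard]
  · -- quotient card
    have hcard : Nat.card (ZMod 65) = Nat.card (ZMod 65 ⧸ sub13) * Nat.card sub13 :=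
      AddSubgroup.card_eq_card_quotient_mul_card_addSubgroup sub13
    have h65 : Nat.card (ZMod 65) = 65 := by simp [Nat.card_eq_fintype_card]
    have h5 : Nat.card sub13 = 5 := by
      have : Nat.card sub13 = ((sub13 : Set (ZMod 65))).ncard :=
        (Nat.card_coe_set_eq _).symm
      rw [this, hsub13, S0_ncard]
    rw [h65, h5] at hcard
    omega
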